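/- arXiv:math/0505319 — 6 statements merged into one kernel-verified Lean document; each statement's English description precedes it below -/
import Mathlib

section
/- Let A be a Banach algebra, σ : A → A a linear map, and for each t ∈ ℝ let α_t : A → A be a bounded linear map such that α_t α_s = α_{t+s} for all t, s ∈ ℝ, α_0 = ι, and each α_t is a σ-endomorphism. Let a, b ∈ A be such that the limits d(a) = lim_{t→0} t⁻¹(α_t(a) − a), d(b) = lim_{t→0} t⁻¹(α_t(b) − b), and d(ab) = lim_{t→0} t⁻¹(α_t(ab) − ab) all exist in A. Then d(ab) = d(a)σ(b) + σ(a)d(b). -/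
open Filter Topology

/-- If `{α_t}` is a uniformly structured one-parameter group of bounded
`σ`-endomorphisms and the generator limits exist at `a`, `b` and `ab`, then
`d(ab) = d(a)σ(b) + σ(a)d(b)`. -/
theorem stmt_2 {A : Type*} [NormedRing A] [NormedAlgebra ℝ A] [CompleteSpace A]
    (σ : A →ₗ[ℝ] A) (α : ℝ → (A →L[ℝ] A))
    (hgroup : ∀ t s : ℝ, (α t).comp (α s) = α (t + s))
    (h0 : α 0 = ContinuousLinearMap.id ℝ A)
    (hendo : ∀ t : ℝ, ∀ a b : A,
      ((α t (a * b) + σ (a * b) - (a * b))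
          - (α t a + σ a - a) * (α t b + σ b - b))
        = σ (a * b) - σ a * σ b)
    (a b da db dab : A)
    (ha : Tendsto (fun t : ℝ => t⁻¹ • (α t a - a)) (𝓝[≠] 0) (𝓝 da))
    (hb : Tendsto (fun t : ℝ => t⁻¹ • (α t b - b)) (𝓝[≠] 0) (𝓝 db))
    (hab : Tendsto (fun t : ℝ => t⁻¹ • (α t (a * b) - a * b)) (𝓝[≠] 0) (𝓝 dab)) :
    dab = da * σ b + σ a * db := by
  -- The key algebraic identity from the σ-endomorphism property:
  have key : ∀ t : ℝ, α t (a * b) - a * b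
      = (α t a - a) * ((α t b - b) + σ b) + σ a * (α t b - b) := by
    intro t
    have h := hendo t a b
    have h' : α t (a * b) - a * b
        = (α t a + σ a - a) * (α t b + σ b - b) - σ a * σ b := by
      linear_combination (norm := noncomm_ring) h
    rw [h']; noncomm_ring
  -- α t b - b → 0 as t → 0 within {0}ᶜ
  have hb0 : Tendsto (fun t : ℝ => α t b - b) (𝓝[≠] 0) (𝓝 0) := by
    have h1 : Tendsto (fun t : ℝ => t • (t⁻¹ • (α t b - b))) (𝓝[≠] 0)
        (𝓝 ((0 : ℝ) • db)) :=
      (tendsto_id.mono_left nhdsWithin_le_nhds).smul hb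
    rw [zero_smul] at h1
    refine h1.congr' ?_
    filter_upwards [self_mem_nhdsWithin] with t ht
    rw [smul_smul, mul_inv_cancel₀ ht, one_smul]
  -- The limit of the right-hand side
  have hrhs : Tendsto (fun t : ℝ =>
      (t⁻¹ • (α t a - a)) * ((α t b - b) + σ b) + σ a * (t⁻¹ • (α t b - b)))
      (𝓝[≠] 0) (𝓝 (da * σ b + σ a * db)) := by
    have h2 : Tendsto (fun t : ℝ => (α t b - b) + σ b) (𝓝[≠] 0) (𝓝 (σ b)) := by
      simpa using hb0.add tendsto_const_nhds
    have := (ha.mul h2).add ((tendsto_const_nhds : Tendsto (fun _ : ℝ => σ a) (𝓝[≠] 0) (𝓝 (σ a))).mul hb)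
    simpa using this
  -- Identify hab with hrhs
  have heq : (fun t : ℝ => t⁻¹ • (α t (a * b) - a * b)) = fun t : ℝ =>
      (t⁻¹ • (α t a - a)) * ((α t b - b) + σ b) + σ a * (t⁻¹ • (α t b - b)) := by
    funext t
    rw [key t, smul_add, smul_mul_assoc, mul_smul_comm]
  rw [heq] at hab
  exact tendsto_nhds_unique hab hrhs
end

section
/- Let A be a Banach algebra, D a subalgebra of A with σ(D) ⊆ D, and let σ, d : D → A be linear maps such that d is a σ-derivation. Then for all a, b, c ∈ D, d(a)(σ(bc) − σ(b)σ(c)) = (σ(ab) − σ(a)σ(b))d(c). -/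
/-- For a `σ`-derivation `d` on a subalgebra `D` with `σ(D) ⊆ D`,
`d(a)(σ(bc) − σ(b)σ(c)) = (σ(ab) − σ(a)σ(b))d(c)` for all `a, b, c ∈ D`. -/
theorem stmt_9 {A : Type*} [NormedRing A] [NormedAlgebra ℝ A] [CompleteSpace A]
    (D : Subalgebra ℝ A) (σ d : D →ₗ[ℝ] A)
    (hσD : ∀ x : D, σ x ∈ D)
    (hder : ∀ a b : D, d (a * b) = d a * σ b + σ a * d b) :
    ∀ a b c : D, d a * (σ (b * c) - σ b * σ c) = (σ (a * b) - σ a * σ b) * d c := by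
  intro a b c
  have h1 := hder a (b * c)
  have h2 := hder (a * b) c
  rw [hder b c] at h1
  rw [hder a b] at h2
  have : d (a * (b * c)) = d ((a * b) * c) := by rw [mul_assoc]
  rw [h1, h2] at this
  linear_combination (norm := noncomm_ring) this
end

section
/- Let A be a Banach algebra, D a subalgebra of A with σ(D) ⊆ D and d(D) ⊆ D, and let σ, d : D → D be linear maps such that d is a σ-derivation. Then for every natural number n ≥ 1 and all a, b ∈ D, dⁿ(ab) = Σ_{k=0}^{2ⁿ−1} φ_{n,k}(a) · φ_{n, 2ⁿ−1−k}(b), where dⁿ is the n-fold iterate of d. -/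
/-- `phi σ d n k` is the composition `g_{n−1} ∘ ⋯ ∘ g_0` where `g_i = d` if the
`i`-th binary digit of `k` is `1` and `g_i = σ` otherwise. -/
def phi {A : Type*} (σ d : A → A) : ℕ → ℕ → A → A
  | 0, _ => id
  | n + 1, k => (if Nat.testBit k n then d else σ) ∘ phi σ d n k

/-
The proof is an induction on `n`. Applying the twisted Leibniz rule to each summand of
`dⁿ(ab)` splits it into a term `σ(φ_{n,k} a) · d(φ_{n,k'} b)` and a term
`d(φ_{n,k} a) · σ(φ_{n,k'} b)`, with `k' = 2ⁿ − 1 − k`. These are exactly the summands of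
index `k` and `2ⁿ + k` of the formula for `n + 1`: setting the top binary digit of an index
`< 2ⁿ⁺¹` turns the outermost `σ` of `φ_{n+1}` into `d`, and passing from `k` to
`2ⁿ⁺¹ − 1 − k` flips that digit.
-/

namespace phi

variable {A : Type*} (σ d : A → A)

theorem congr_of_testBit {n k k' : ℕ} (h : ∀ i < n, k.testBit i = k'.testBit i) :
    phi σ d n k = phi σ d n k' := by
  induction n with
  | zero => rfl
  | succ n ih =>
    simp only [phi, h n n.lt_succ_self, ih fun i hi => h i (hi.trans n.lt_succ_self)]

theorem two_pow_add (n k : ℕ) : phi σ d n (2 ^ n + k) = phi σ d n k :=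
  congr_of_testBit σ d fun _ hi => Nat.testBit_two_pow_add_gt hi k

theorem succ_of_lt {n k : ℕ} (hk : k < 2 ^ n) : phi σ d (n + 1) k = σ ∘ phi σ d n k := by
  simp only [phi, Nat.testBit_lt_two_pow hk, Bool.false_eq_true, if_false]

theorem succ_two_pow_add {n k : ℕ} (hk : k < 2 ^ n) :
    phi σ d (n + 1) (2 ^ n + k) = d ∘ phi σ d n k := by
  simp only [phi, Nat.testBit_two_pow_add_eq, Nat.testBit_lt_two_pow hk, Bool.not_false,
    if_true, two_pow_add]

end phi

theorem iterate_apply_mul_eq_sum_phi {R : Type*} [AddCommMonoid R] [Mul R] (σ : R → R)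
    (d : R →+ R) (hder : ∀ a b : R, d (a * b) = d a * σ b + σ a * d b) (n : ℕ) (a b : R) :
    (⇑d)^[n] (a * b)
      = ∑ k ∈ Finset.range (2 ^ n), phi σ d n k a * phi σ d n (2 ^ n - 1 - k) b := by
  induction n with
  | zero => simp [phi]
  | succ n ih =>
    have low : ∀ k ∈ Finset.range (2 ^ n),
        phi σ d (n + 1) k a * phi σ d (n + 1) (2 ^ (n + 1) - 1 - k) b
          = σ (phi σ d n k a) * d (phi σ d n (2 ^ n - 1 - k) b) := by
      intro k hk
      have hk : k < 2 ^ n := Finset.mem_range.mp hk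
      have hcompl : 2 ^ (n + 1) - 1 - k = 2 ^ n + (2 ^ n - 1 - k) := by
        rw [Nat.two_pow_succ]; omega
      rw [hcompl, phi.succ_of_lt σ d hk, phi.succ_two_pow_add σ d (by omega)]
      rfl
    have high : ∀ k ∈ Finset.range (2 ^ n),
        phi σ d (n + 1) (2 ^ n + k) a * phi σ d (n + 1) (2 ^ (n + 1) - 1 - (2 ^ n + k)) b
          = d (phi σ d n k a) * σ (phi σ d n (2 ^ n - 1 - k) b) := by
      intro k hk
      have hk : k < 2 ^ n := Finset.mem_range.mp hk
      have hcompl : 2 ^ (n + 1) - 1 - (2 ^ n + k) = 2 ^ n - 1 - k := by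
        rw [Nat.two_pow_succ]; omega
      rw [hcompl, phi.succ_two_pow_add σ d hk, phi.succ_of_lt σ d (by omega)]
      rfl
    rw [Function.iterate_succ_apply', ih, map_sum, Nat.two_pow_succ, Finset.sum_range_add,
      ← Nat.two_pow_succ, Finset.sum_congr rfl low, Finset.sum_congr rfl high,
      add_comm, ← Finset.sum_add_distrib]
    exact Finset.sum_congr rfl fun k _ => hder _ _

theorem stmt_11_general {A : Type*} [NormedRing A] [NormedAlgebra ℝ A]
    (D : Subalgebra ℝ A) (σ d : D →ₗ[ℝ] D)
    (hder : ∀ a b : D, d (a * b) = d a * σ b + σ a * d b) :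
    ∀ (n : ℕ), 1 ≤ n → ∀ a b : D,
      (⇑d)^[n] (a * b)
        = ∑ k ∈ Finset.range (2 ^ n),
            phi (⇑σ) (⇑d) n k a * phi (⇑σ) (⇑d) n (2 ^ n - 1 - k) b :=
  fun n _ => iterate_apply_mul_eq_sum_phi σ d.toAddMonoidHom hder n

/-- generalized Leibniz rule: for a `σ`-derivation `d` on a
subalgebra `D` (with `σ(D) ⊆ D`, `d(D) ⊆ D`),
`dⁿ(ab) = Σ_{k=0}^{2ⁿ−1} φ_{n,k}(a)·φ_{n,2ⁿ−1−k}(b)`. -/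
theorem stmt_11 {A : Type*} [NormedRing A] [NormedAlgebra ℝ A] [CompleteSpace A]
    (D : Subalgebra ℝ A) (σ d : D →ₗ[ℝ] D)
    (hder : ∀ a b : D, d (a * b) = d a * σ b + σ a * d b) :
    ∀ (n : ℕ), 1 ≤ n → ∀ a b : D,
      (⇑d)^[n] (a * b)
        = ∑ k ∈ Finset.range (2 ^ n),
            phi (⇑σ) (⇑d) n k a * phi (⇑σ) (⇑d) n (2 ^ n - 1 - k) b :=
  stmt_11_general D σ d hder
end

section
/- Let A be a Banach algebra, σ : A → A an algebra endomorphism, and d : A → A a σ-derivation. Then for every natural number n ≥ 1, every 0 ≤ k ≤ 2ⁿ − 1, and all a, b ∈ A, φ_{n,k}(ab) = Σ_{ℓ ∈ T_k} φ_{n,ℓ}(a) · φ_{n, k−ℓ}(b). -/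
open Classical

/-- `phi` only depends on the low `n` bits. -/
lemma phi_congr {A : Type*} (σ d : A → A) (n : ℕ) {k k' : ℕ}
    (h : ∀ i < n, k.testBit i = k'.testBit i) : phi σ d n k = phi σ d n k' := by
  induction n with
  | zero => rfl
  | succ n ih =>
    simp only [phi, ih (fun i hi => h i (Nat.lt_succ_of_lt hi)), h n (Nat.lt_succ_self n)]

lemma testBit_add_pow {n ℓ : ℕ} (h : ℓ < 2 ^ n) (j : ℕ) :
    (ℓ + 2 ^ n).testBit j = if j < n then ℓ.testBit j else decide (j = n) := by
  have h1 : ℓ + 2 ^ n = 2 ^ n * 1 + ℓ := by ring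
  rw [h1, Nat.testBit_two_pow_mul_add 1 h j]
  by_cases hj : j < n
  · simp [hj]
  · simp only [hj, if_false]
    rcases Nat.lt_or_ge n j with hlt | hge
    · have h2 : 2 ≤ 2 ^ (j - n) := by
        calc 2 = 2 ^ 1 := rfl
          _ ≤ 2 ^ (j - n) := Nat.pow_le_pow_right (by norm_num) (by omega)
      have hfalse : Nat.testBit 1 (j - n) = false := Nat.testBit_lt_two_pow (by omega)
      rw [hfalse]
      simp [show j ≠ n by omega]
    · have hjn : j = n := by omega
      simp [hjn]

lemma submask_le {ℓ k : ℕ} (h : ∀ i, ℓ.testBit i = true → k.testBit i = true) : ℓ ≤ k := by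
  have hand : ℓ &&& k = ℓ := by
    apply Nat.eq_of_testBit_eq
    intro i
    rw [Nat.testBit_and]
    cases hb : ℓ.testBit i
    · simp
    · simp [h i hb]
  calc ℓ = ℓ &&& k := hand.symm
    _ ≤ k := Nat.and_le_right

lemma mem_S {ℓ k : ℕ} :
    ℓ ∈ (Finset.range (k + 1)).filter
        (fun ℓ => ∀ i : ℕ, ℓ.testBit i = true → k.testBit i = true)
      ↔ (∀ i : ℕ, ℓ.testBit i = true → k.testBit i = true) := by
  simp only [Finset.mem_filter, Finset.mem_range]
  constructor
  · exact fun h => h.2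
  · exact fun h => ⟨Nat.lt_succ_of_le (submask_le h), h⟩

lemma lt_pow_of_testBit_false {x n : ℕ} (h1 : x < 2 ^ (n + 1)) (h2 : x.testBit n = false) :
    x < 2 ^ n := by
  have hp : 0 < 2 ^ n := Nat.two_pow_pos n
  have hq : x / 2 ^ n < 2 := by
    rw [Nat.div_lt_iff_lt_mul hp]
    rw [pow_succ] at h1
    omega
  rw [Nat.testBit_eq_decide_div_mod_eq, decide_eq_false_iff_not, Nat.mod_eq_of_lt hq] at h2
  have hq0 : x / 2 ^ n = 0 := by
    generalize hg : x / 2 ^ n = q at h2 hq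
    omega
  have hdm := Nat.div_add_mod x (2 ^ n)
  rw [hq0, Nat.mul_zero, Nat.zero_add] at hdm
  have := Nat.mod_lt x hp
  omega

/-- The key inductive lemma, for all `n`. -/
lemma key {A : Type*} [NormedRing A] [NormedAlgebra ℝ A]
    (σ d : A →ₗ[ℝ] A)
    (hσ : ∀ a b : A, σ (a * b) = σ a * σ b)
    (hder : ∀ a b : A, d (a * b) = d a * σ b + σ a * d b) :
    ∀ (n k : ℕ), k < 2 ^ n → ∀ a b : A,
      phi (⇑σ) (⇑d) n k (a * b)
        = ∑ ℓ ∈ (Finset.range (k + 1)).filter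
            (fun ℓ => ∀ i : ℕ, ℓ.testBit i = true → k.testBit i = true),
            phi (⇑σ) (⇑d) n ℓ a * phi (⇑σ) (⇑d) n (k - ℓ) b := by
  intro n
  induction n with
  | zero =>
    intro k hk a b
    have hk0 : k = 0 := by omega
    subst hk0
    have hfil : (Finset.range (0 + 1)).filter
        (fun ℓ => ∀ i : ℕ, ℓ.testBit i = true → Nat.testBit 0 i = true) = {0} := by
      ext x
      simp only [Finset.mem_filter, Finset.mem_range, Nat.lt_one_iff, Finset.mem_singleton]
      constructor
      · rintro ⟨h, _⟩; omega
      · rintro rfl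
        exact ⟨by omega, fun i hi => by simp [Nat.zero_testBit] at hi⟩
    rw [hfil, Finset.sum_singleton]
    simp [phi]
  | succ n ih =>
    intro k hk a b
    by_cases hb : k.testBit n
    · -- bit n of k is 1
      have h2n : 2 ^ n ≤ k := Nat.ge_two_pow_of_testBit hb
      set m := k - 2 ^ n with hm_def
      have hpow : 2 ^ (n + 1) = 2 ^ n * 2 := pow_succ 2 n
      have hm : m < 2 ^ n := by omega
      have hk_eq : k = m + 2 ^ n := by omega
      have tbk : ∀ j, k.testBit j = if j < n then m.testBit j else decide (j = n) := by
        intro j; rw [hk_eq]; exact testBit_add_pow hm j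
      have tbm_hi : ∀ i, n ≤ i → m.testBit i = false := fun i hi =>
        Nat.testBit_lt_two_pow (Nat.lt_of_lt_of_le hm (Nat.pow_le_pow_right (by norm_num) hi))
      -- the submask set of k splits
      have hset : (Finset.range (k + 1)).filter
            (fun ℓ => ∀ i : ℕ, ℓ.testBit i = true → k.testBit i = true)
          = ((Finset.range (m + 1)).filter
              (fun ℓ => ∀ i : ℕ, ℓ.testBit i = true → m.testBit i = true))
            ∪ ((Finset.range (m + 1)).filter
              (fun ℓ => ∀ i : ℕ, ℓ.testBit i = true → m.testBit i = true)).image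
                (· + 2 ^ n) := by
        ext ℓ'
        simp only [Finset.mem_union, Finset.mem_image, mem_S]
        constructor
        · intro h
          have hle : ℓ' ≤ k := submask_le h
          by_cases hbn : ℓ'.testBit n
          · right
            have h2 : 2 ^ n ≤ ℓ' := Nat.ge_two_pow_of_testBit hbn
            refine ⟨ℓ' - 2 ^ n, ?_, by omega⟩
            intro i hi
            have hℓlt : ℓ' - 2 ^ n < 2 ^ n := by omega
            by_cases hin : i < n
            · have : ℓ'.testBit i = (ℓ' - 2 ^ n).testBit i := by
                have := testBit_add_pow hℓlt i
                rw [show ℓ' - 2 ^ n + 2 ^ n = ℓ' by omega] at this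
                simp [this, hin]
              have hki := h i (by rw [this]; exact hi)
              rw [tbk i, if_pos hin] at hki
              exact hki
            · exfalso
              have : (ℓ' - 2 ^ n) < 2 ^ i :=
                Nat.lt_of_lt_of_le hℓlt (Nat.pow_le_pow_right (by norm_num) (by omega))
              rw [Nat.testBit_lt_two_pow this] at hi
              exact Bool.false_ne_true hi
          · left
            have hℓlt : ℓ' < 2 ^ n := lt_pow_of_testBit_false (by omega) (by simpa using hbn)
            intro i hi
            by_cases hin : i < n
            · have hki := h i hi
              rw [tbk i, if_pos hin] at hki
              exact hki
            · exfalso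
              have : ℓ' < 2 ^ i :=
                Nat.lt_of_lt_of_le hℓlt (Nat.pow_le_pow_right (by norm_num) (by omega))
              rw [Nat.testBit_lt_two_pow this] at hi
              exact Bool.false_ne_true hi
        · rintro (h | ⟨ℓ, hℓ, rfl⟩)
          · intro i hi
            have hin : i < n := by
              by_contra hc
              have h1 := h i hi
              rw [tbm_hi i (by omega)] at h1
              exact Bool.false_ne_true h1
            rw [tbk i, if_pos hin]
            exact h i hi
          · have hℓlt : ℓ < 2 ^ n := lt_of_le_of_lt (submask_le hℓ) hm
            intro i hi
            rw [testBit_add_pow hℓlt i] at hi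
            rw [tbk i]
            by_cases hin : i < n
            · rw [if_pos hin] at hi ⊢
              exact hℓ i hi
            · rw [if_neg hin] at hi ⊢
              exact hi
      have hdisj : Disjoint
          ((Finset.range (m + 1)).filter
              (fun ℓ => ∀ i : ℕ, ℓ.testBit i = true → m.testBit i = true))
          (((Finset.range (m + 1)).filter
              (fun ℓ => ∀ i : ℕ, ℓ.testBit i = true → m.testBit i = true)).image
                (· + 2 ^ n)) := by
        rw [Finset.disjoint_left]
        intro x hx hx2
        simp only [Finset.mem_image, mem_S] at hx hx2
        obtain ⟨y, _, hy⟩ := hx2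
        have := submask_le hx
        omega
      rw [hset, Finset.sum_union hdisj,
        Finset.sum_image (fun x _ y _ h => by omega)]
      -- compute LHS
      have lhs_eq : phi (⇑σ) (⇑d) (n + 1) k (a * b) = d (phi (⇑σ) (⇑d) n m (a * b)) := by
        simp only [phi, Function.comp_apply, hb, if_true]
        congr 1
        exact congrFun (phi_congr _ _ n fun i hi => by
          rw [tbk i, if_pos hi]) (a * b)
      rw [lhs_eq, ih m hm a b, map_sum, ← Finset.sum_add_distrib]
      apply Finset.sum_congr rfl
      intro ℓ hℓ
      rw [mem_S] at hℓ
      have hℓle : ℓ ≤ m := submask_le hℓ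
      have hℓlt : ℓ < 2 ^ n := lt_of_le_of_lt hℓle hm
      have hmd : m - ℓ < 2 ^ n := by omega
      -- phi values at level n+1
      have e1 : phi (⇑σ) (⇑d) (n + 1) ℓ a = σ (phi (⇑σ) (⇑d) n ℓ a) := by
        simp [phi, Nat.testBit_lt_two_pow hℓlt]
      have e2 : phi (⇑σ) (⇑d) (n + 1) (k - ℓ) b = d (phi (⇑σ) (⇑d) n (m - ℓ) b) := by
        have hkl : k - ℓ = (m - ℓ) + 2 ^ n := by omega
        have tb := testBit_add_pow hmd
        have htb : ((m - ℓ) + 2 ^ n).testBit n = true := by rw [tb n]; simp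
        rw [hkl]
        simp only [phi, Function.comp_apply]
        rw [show ((if ((m - ℓ) + 2 ^ n).testBit n then ⇑d else ⇑σ) = ⇑d) by rw [htb]; simp]
        congr 1
        exact congrFun (phi_congr _ _ n fun i hi => by rw [tb i, if_pos hi]) b
      have e3 : phi (⇑σ) (⇑d) (n + 1) (ℓ + 2 ^ n) a = d (phi (⇑σ) (⇑d) n ℓ a) := by
        have tb := testBit_add_pow hℓlt
        have htb : (ℓ + 2 ^ n).testBit n = true := by rw [tb n]; simp
        simp only [phi, Function.comp_apply]
        rw [show ((if (ℓ + 2 ^ n).testBit n then ⇑d else ⇑σ) = ⇑d) by rw [htb]; simp]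
        congr 1
        exact congrFun (phi_congr _ _ n fun i hi => by rw [tb i, if_pos hi]) a
      have e4 : phi (⇑σ) (⇑d) (n + 1) (k - (ℓ + 2 ^ n)) b = σ (phi (⇑σ) (⇑d) n (m - ℓ) b) := by
        have hkl : k - (ℓ + 2 ^ n) = m - ℓ := by omega
        rw [hkl]
        simp [phi, Nat.testBit_lt_two_pow hmd]
      rw [e1, e2, e3, e4, hder]
      rw [add_comm]
    · -- bit n of k is 0
      have hklt : k < 2 ^ n := lt_pow_of_testBit_false hk (by simpa using hb)
      have lhs_eq : phi (⇑σ) (⇑d) (n + 1) k (a * b) = σ (phi (⇑σ) (⇑d) n k (a * b)) := by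
        simp [phi, hb]
      rw [lhs_eq, ih k hklt a b, map_sum]
      apply Finset.sum_congr rfl
      intro ℓ hℓ
      rw [mem_S] at hℓ
      have hℓlt : ℓ < 2 ^ n := lt_of_le_of_lt (submask_le hℓ) hklt
      have hmd : k - ℓ < 2 ^ n := by omega
      have e1 : phi (⇑σ) (⇑d) (n + 1) ℓ a = σ (phi (⇑σ) (⇑d) n ℓ a) := by
        simp [phi, Nat.testBit_lt_two_pow hℓlt]
      have e2 : phi (⇑σ) (⇑d) (n + 1) (k - ℓ) b = σ (phi (⇑σ) (⇑d) n (k - ℓ) b) := by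
        simp [phi, Nat.testBit_lt_two_pow hmd]
      rw [e1, e2, hσ]

/-- If `σ` is an algebra endomorphism and `d` a `σ`-derivation,
then `φ_{n,k}(ab) = Σ_{ℓ ∈ T_k} φ_{n,ℓ}(a)·φ_{n,k−ℓ}(b)`, where the sum runs
over the bitwise submasks `ℓ` of `k`. -/
theorem stmt_14 {A : Type*} [NormedRing A] [NormedAlgebra ℝ A] [CompleteSpace A]
    (σ d : A →ₗ[ℝ] A)
    (hσ : ∀ a b : A, σ (a * b) = σ a * σ b)
    (hder : ∀ a b : A, d (a * b) = d a * σ b + σ a * d b) :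
    ∀ (n k : ℕ), 1 ≤ n → k ≤ 2 ^ n - 1 → ∀ a b : A,
      phi (⇑σ) (⇑d) n k (a * b)
        = ∑ ℓ ∈ (Finset.range (k + 1)).filter
            (fun ℓ => ∀ i : ℕ, ℓ.testBit i = true → k.testBit i = true),
            phi (⇑σ) (⇑d) n ℓ a * phi (⇑σ) (⇑d) n (k - ℓ) b := by
  intro n k _ hk a b
  have hpos : 0 < 2 ^ n := Nat.two_pow_pos n
  exact key σ d hσ hder n k (by omega) a b
end

section
/- Let A be a Banach algebra, σ : A → A a bounded algebra endomorphism, and d : A → A a bounded σ-derivation with d ∘ σ = σ ∘ d = d. If a ∈ A satisfies d²(a) = 0, then dⁿ(aⁿ) = n! · d(a)ⁿ for every natural number n ≥ 1. -/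
open Finset

section Aux

variable {A : Type*} [NormedRing A] [NormedAlgebra ℝ A]

/-- Product over `range n`: `d a` at positions in `s`, `σ^[m] a` elsewhere. -/
noncomputable def Fp (σ d : A →L[ℝ] A) (a : A) (m n : ℕ) (s : Finset ℕ) : A :=
  ((List.range n).map (fun i => if i ∈ s then d a else (⇑σ)^[m] a)).prod

variable (σ d : A →L[ℝ] A) (a : A)

lemma Fp_congr {m n : ℕ} {s t : Finset ℕ} (h : ∀ i < n, (i ∈ s ↔ i ∈ t)) :
    Fp σ d a m n s = Fp σ d a m n t := by
  unfold Fp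
  congr 1
  apply List.map_congr_left
  intro i hi
  rw [List.mem_range] at hi
  by_cases hc : i ∈ s
  · simp [hc, (h i hi).mp hc]
  · simp [hc, show i ∉ t from fun ht => hc ((h i hi).mpr ht)]

lemma sigma_prod (hσ : ∀ a b : A, σ (a * b) = σ a * σ b) :
    ∀ (l : List A), l ≠ [] → σ l.prod = (l.map ⇑σ).prod := by
  intro l
  induction l with
  | nil => intro h; exact absurd rfl h
  | cons x xs ih =>
    intro _
    cases xs with
    | nil => simp
    | cons y t =>
      rw [List.prod_cons, hσ, ih (by simp)]
      simp

lemma dσm (hdσ : ∀ x : A, d (σ x) = d x) : ∀ m : ℕ, d ((⇑σ)^[m] a) = d a := by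
  intro m
  induction m with
  | zero => rfl
  | succ m ih => rw [Function.iterate_succ_apply', hdσ, ih]

lemma σFp (hσ : ∀ a b : A, σ (a * b) = σ a * σ b) (hσd : ∀ x : A, σ (d x) = d x)
    (m n : ℕ) (s : Finset ℕ) :
    σ (Fp σ d a m (n + 1) s) = Fp σ d a (m + 1) (n + 1) s := by
  unfold Fp
  rw [sigma_prod σ hσ _ (by simp), List.map_map]
  congr 1
  apply List.map_congr_left
  intro i _
  by_cases hc : i ∈ s
  · simp [hc, hσd]
  · simp [hc, Function.iterate_succ_apply']

lemma dFp (hσ : ∀ a b : A, σ (a * b) = σ a * σ b)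
    (hder : ∀ a b : A, d (a * b) = d a * σ b + σ a * d b)
    (hdσ : ∀ x : A, d (σ x) = d x) (hσd : ∀ x : A, σ (d x) = d x)
    (ha : d (d a) = 0) :
    ∀ (n m : ℕ) (s : Finset ℕ),
      d (Fp σ d a m (n + 1) s) =
        ∑ j ∈ (range (n + 1)) \ s, Fp σ d a (m + 1) (n + 1) (insert j s) := by
  intro n
  induction n with
  | zero =>
    intro m s
    by_cases hc : 0 ∈ s
    · have : range 1 \ s = ∅ := by
        ext j; simp only [mem_sdiff, mem_range, Nat.lt_one_iff, notMem_empty,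
          iff_false, not_and]
        rintro rfl; simp [hc]
      rw [this, Finset.sum_empty]
      simp [Fp, List.range_succ, hc, ha]
    · have : range 1 \ s = {0} := by
        ext j; simp only [mem_sdiff, mem_range, Nat.lt_one_iff, mem_singleton]
        constructor
        · rintro ⟨rfl, _⟩; rfl
        · rintro rfl; exact ⟨rfl, hc⟩
      rw [this, Finset.sum_singleton]
      simp [Fp, List.range_succ, hc, dσm σ d a hdσ]
  | succ n ih =>
    intro m s
    have hsplit : Fp σ d a m (n + 2) s =
        Fp σ d a m (n + 1) s * (if n + 1 ∈ s then d a else (⇑σ)^[m] a) := by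
      unfold Fp
      rw [List.range_succ, List.map_append, List.prod_append]
      simp
    rw [hsplit, hder, σFp σ d a hσ hσd, ih m s, Finset.sum_mul]
    have term1 : ∀ j ∈ range (n + 1) \ s,
        Fp σ d a (m + 1) (n + 1) (insert j s) *
          σ (if n + 1 ∈ s then d a else (⇑σ)^[m] a) =
        Fp σ d a (m + 1) (n + 2) (insert j s) := by
      intro j hj
      rw [mem_sdiff, mem_range] at hj
      have hj1 : j ≠ n + 1 := by omega
      have : Fp σ d a (m + 1) (n + 2) (insert j s) =
          Fp σ d a (m + 1) (n + 1) (insert j s) *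
            (if n + 1 ∈ insert j s then d a else (⇑σ)^[m+1] a) := by
        unfold Fp
        rw [List.range_succ, List.map_append, List.prod_append]
        simp
      rw [this]
      congr 1
      by_cases hc : n + 1 ∈ s
      · simp [Finset.mem_insert, hc, hσd]
      · simp [Finset.mem_insert, hc, Ne.symm hj1, Function.iterate_succ_apply']
    rw [Finset.sum_congr rfl term1]
    have term2 : Fp σ d a (m + 1) (n + 1) s *
        d (if n + 1 ∈ s then d a else (⇑σ)^[m] a) =
        if n + 1 ∈ s then 0 else Fp σ d a (m + 1) (n + 2) (insert (n + 1) s) := by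
      by_cases hc : n + 1 ∈ s
      · simp [hc, ha]
      · have h1 : Fp σ d a (m + 1) (n + 2) (insert (n + 1) s) =
            Fp σ d a (m + 1) (n + 1) (insert (n + 1) s) *
              (if n + 1 ∈ insert (n + 1) s then d a else (⇑σ)^[m+1] a) := by
          unfold Fp
          rw [List.range_succ, List.map_append, List.prod_append]
          simp
        have h2 : Fp σ d a (m + 1) (n + 1) (insert (n + 1) s) =
            Fp σ d a (m + 1) (n + 1) s :=
          Fp_congr σ d a (by
            intro i hi
            rw [Finset.mem_insert]
            exact ⟨fun h => h.resolve_left (by omega), Or.inr⟩)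
        rw [h1, h2]
        simp [hc, dσm σ d a hdσ]
    rw [term2]
    -- now split RHS sum
    have hs : range (n + 2) \ s =
        if n + 1 ∈ s then range (n + 1) \ s else insert (n + 1) (range (n + 1) \ s) := by
      by_cases hc : n + 1 ∈ s
      · simp only [hc, if_true]
        ext j
        simp only [mem_sdiff, mem_range]
        constructor
        · rintro ⟨hj, hjs⟩
          refine ⟨?_, hjs⟩
          rcases Nat.lt_succ_iff_lt_or_eq.mp hj with h | h
          · exact h
          · exact absurd (h ▸ hc) hjs
        · rintro ⟨hj, hjs⟩; exact ⟨by omega, hjs⟩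
      · simp only [hc, if_false]
        ext j
        simp only [mem_sdiff, mem_range, Finset.mem_insert]
        constructor
        · rintro ⟨hj, hjs⟩
          rcases Nat.lt_succ_iff_lt_or_eq.mp hj with h | h
          · exact Or.inr ⟨h, hjs⟩
          · exact Or.inl h
        · rintro (rfl | ⟨hj, hjs⟩)
          · exact ⟨by omega, hc⟩
          · exact ⟨by omega, hjs⟩
    by_cases hc : n + 1 ∈ s
    · rw [hs]; simp [hc]
    · rw [hs]
      simp only [hc, if_false]
      rw [Finset.sum_insert (by simp)]
      exact add_comm _ _

end Aux

/-- If `σ` is a bounded endomorphism, `d` a bounded `σ`-derivation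
with `d ∘ σ = σ ∘ d = d`, and `d²(a) = 0`, then `dⁿ(aⁿ) = n!·d(a)ⁿ` for `n ≥ 1`. -/
theorem stmt_15 {A : Type*} [NormedRing A] [NormedAlgebra ℝ A] [CompleteSpace A]
    (σ d : A →L[ℝ] A)
    (hσ : ∀ a b : A, σ (a * b) = σ a * σ b)
    (hder : ∀ a b : A, d (a * b) = d a * σ b + σ a * d b)
    (hdσ : ∀ x : A, d (σ x) = d x) (hσd : ∀ x : A, σ (d x) = d x)
    (a : A) (ha : d (d a) = 0) :
    ∀ n : ℕ, 1 ≤ n → (⇑d)^[n] (a ^ n) = n.factorial • (d a) ^ n := by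
  intro n hn
  obtain ⟨n, rfl⟩ : ∃ m, n = m + 1 := ⟨n - 1, by omega⟩
  -- key claim
  have key : ∀ k : ℕ, k ≤ n + 1 →
      (⇑d)^[k] (a ^ (n + 1)) =
        k.factorial • ∑ s ∈ (range (n + 1)).powersetCard k, Fp σ d a k (n + 1) s := by
    intro k hk
    induction k with
    | zero =>
      simp only [Function.iterate_zero, id_eq, Nat.factorial_zero, one_smul,
        Finset.powersetCard_zero, Finset.sum_singleton]
      unfold Fp
      simp only [Finset.notMem_empty, if_false, Function.iterate_zero, id_eq]
      simp [List.map_const', List.prod_replicate]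
    | succ k ihk =>
      have hk' : k ≤ n + 1 := by omega
      rw [Function.iterate_succ_apply', ihk hk', map_nsmul, map_sum]
      have step : ∀ s ∈ (range (n + 1)).powersetCard k,
          d (Fp σ d a k (n + 1) s) =
            ∑ j ∈ (range (n + 1)) \ s, Fp σ d a (k + 1) (n + 1) (insert j s) :=
        fun s _ => dFp σ d a hσ hder hdσ hσd ha n k s
      rw [Finset.sum_congr rfl step]
      -- double counting
      have count : ∑ s ∈ (range (n + 1)).powersetCard k,
            ∑ j ∈ (range (n + 1)) \ s, Fp σ d a (k + 1) (n + 1) (insert j s) =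
          (k + 1) • ∑ t ∈ (range (n + 1)).powersetCard (k + 1), Fp σ d a (k + 1) (n + 1) t := by
        rw [Finset.sum_sigma']
        have : ((range (n + 1)).powersetCard (k + 1)).sum
            (fun t => (k + 1) • Fp σ d a (k + 1) (n + 1) t) =
            ∑ p ∈ ((range (n + 1)).powersetCard (k + 1)).sigma (fun t => t),
              Fp σ d a (k + 1) (n + 1) p.1 := by
          rw [Finset.sum_sigma]
          apply Finset.sum_congr rfl
          intro t ht
          show _ = ∑ _j ∈ t, Fp σ d a (k + 1) (n + 1) t
          rw [Finset.sum_const]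
          congr 1
          rw [Finset.mem_powersetCard] at ht
          exact ht.2.symm
        rw [Finset.smul_sum, this]
        apply Finset.sum_bij'
          (i := fun p _ => (⟨insert p.2 p.1, p.2⟩ : (_ : Finset ℕ) × ℕ))
          (j := fun p _ => (⟨p.1.erase p.2, p.2⟩ : (_ : Finset ℕ) × ℕ))
        · intro p hp
          rw [Finset.mem_sigma] at hp ⊢
          obtain ⟨hs, hj⟩ := hp
          rw [Finset.mem_powersetCard] at hs
          rw [Finset.mem_sdiff] at hj
          refine ⟨Finset.mem_powersetCard.mpr ⟨?_, ?_⟩, Finset.mem_insert_self _ _⟩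
          · exact Finset.insert_subset hj.1 hs.1
          · rw [Finset.card_insert_of_notMem hj.2, hs.2]
        · intro p hp
          rw [Finset.mem_sigma] at hp ⊢
          obtain ⟨ht, hj⟩ := hp
          rw [Finset.mem_powersetCard] at ht
          refine ⟨Finset.mem_powersetCard.mpr ⟨?_, ?_⟩, Finset.mem_sdiff.mpr ⟨?_, ?_⟩⟩
          · exact (Finset.erase_subset _ _).trans ht.1
          · rw [Finset.card_erase_of_mem hj, ht.2]; rfl
          · exact ht.1 hj
          · exact Finset.notMem_erase _ _
        · intro p hp
          rw [Finset.mem_sigma, Finset.mem_sdiff] at hp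
          exact Sigma.ext (by simp [Finset.erase_insert hp.2.2]) (by simp)
        · intro p hp
          rw [Finset.mem_sigma] at hp
          exact Sigma.ext (by simp [Finset.insert_erase hp.2]) (by simp)
        · intro p _
          rfl
      rw [count, smul_smul]
      congr 1
      rw [Nat.factorial_succ, Nat.mul_comm]
  have := key (n + 1) le_rfl
  rw [this]
  have hps : powersetCard (n + 1) (range (n + 1)) = {range (n + 1)} := by
    simpa using Finset.powersetCard_self (range (n + 1))
  rw [hps, Finset.sum_singleton]
  congr 1
  unfold Fp
  have : ∀ i ∈ List.range (n + 1),
      (if i ∈ range (n + 1) then d a else (⇑σ)^[n+1] a) = d a := by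
    intro i hi
    rw [List.mem_range] at hi
    simp [Finset.mem_range.mpr hi]
  rw [List.map_congr_left this]
  simp [List.map_const', List.prod_replicate]
end

section
/- Let A be a complex Banach algebra, σ : A → A a bounded algebra endomorphism, and d : A → A a bounded σ-derivation with d ∘ σ = σ ∘ d = d. If a ∈ A satisfies d²(a) = 0, then d(a) is quasinilpotent, i.e. the spectral radius of d(a) is 0. -/
/-!
Put `b = d a`. Since `d b = 0` and `σ b = b`, the iterates of `d` obey the Leibniz-type rule
`d^[n+1] (a * y) = σ^[n+1] a * d^[n+1] y + (n + 1) • (b * d^[n] (σ y))`, and induction on `n`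
gives `d^[n] (a ^ n) = n! • b ^ n` for `n ≥ 1`. Hence `n! ‖b ^ n‖ ≤ (‖d‖ ‖a‖) ^ n`, so
`‖b ^ n‖ ^ (1 / n) → 0`, and the spectral radius of `b`, which is at most the liminf of these
roots, vanishes.
-/

open Filter Function
open scoped ENNReal NNReal Nat

theorem apply_iterate_of_apply_comp {α β : Type*} {σ : α → α} {d : α → β}
    (hdσ : ∀ x, d (σ x) = d x) (n : ℕ) (x : α) : d (σ^[n] x) = d x := by
  induction n with
  | zero => rfl
  | succ n ih => rw [iterate_succ_apply', hdσ, ih]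

theorem iterate_succ_apply_of_apply_comp {α : Type*} {σ d : α → α}
    (hdσ : ∀ x, d (σ x) = d x) (n : ℕ) (x : α) : d^[n + 1] (σ x) = d^[n + 1] x := by
  rw [iterate_succ_apply, iterate_succ_apply, hdσ]

theorem apply_pow_succ_eq_zero_of_apply_mul {R : Type*} [Semiring R] {σ d : R → R}
    (hder : ∀ x y, d (x * y) = d x * σ y + σ x * d y) {b : R} (hdb : d b = 0) (hσb : σ b = b)
    (k : ℕ) : d (b ^ (k + 1)) = 0 := by
  induction k with
  | zero => simpa using hdb
  | succ k ih => rw [pow_succ', hder, hdb, zero_mul, zero_add, hσb, ih, mul_zero]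

namespace SigmaDerivation

variable {R F : Type*} [Semiring R] [FunLike F R R] [AddMonoidHomClass F R R] {σ : R → R} {d : F}

theorem iterate_apply_mul (hder : ∀ x y, d (x * y) = d x * σ y + σ x * d y)
    (hdσ : ∀ x, d (σ x) = d x) (hσd : ∀ x, σ (d x) = d x) {a : R} (ha : d (d a) = 0)
    (n : ℕ) (y : R) :
    (⇑d)^[n + 1] (a * y) = σ^[n + 1] a * (⇑d)^[n + 1] y + (n + 1) • (d a * (⇑d)^[n] (σ y)) := by
  induction n with
  | zero => simp [hder, add_comm]
  | succ n ih =>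
    have hfirst : d (σ^[n + 1] a * (⇑d)^[n + 1] y) =
        d a * (⇑d)^[n + 1] y + σ^[n + 1 + 1] a * (⇑d)^[n + 1 + 1] y := by
      simp only [hder, iterate_succ_apply', hdσ, hσd, apply_iterate_of_apply_comp hdσ]
    have hsecond : d (d a * (⇑d)^[n] (σ y)) = d a * (⇑d)^[n + 1] (σ y) := by
      rw [hder, ha, zero_mul, zero_add, hσd, iterate_succ_apply']
    rw [iterate_succ_apply' _ (n + 1), ih, map_add, map_nsmul, hfirst, hsecond,
      iterate_succ_apply_of_apply_comp hdσ, succ_nsmul _ (n + 1)]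
    abel

theorem iterate_apply_pow (hder : ∀ x y, d (x * y) = d x * σ y + σ x * d y)
    (hdσ : ∀ x, d (σ x) = d x) (hσd : ∀ x, σ (d x) = d x) {a : R} (ha : d (d a) = 0) (n : ℕ) :
    (⇑d)^[n + 1] (a ^ (n + 1)) = (n + 1)! • d a ^ (n + 1) := by
  induction n with
  | zero => simp
  | succ n ih =>
    have hvanish : (⇑d)^[n + 2] (a ^ (n + 1)) = 0 := by
      rw [iterate_succ_apply', ih, map_nsmul,
        apply_pow_succ_eq_zero_of_apply_mul hder ha (hσd a), smul_zero]
    rw [pow_succ', iterate_apply_mul hder hdσ hσd ha, hvanish, mul_zero, zero_add,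
      iterate_succ_apply_of_apply_comp hdσ, ih, mul_smul_comm, smul_smul, ← pow_succ',
      ← Nat.factorial_succ]

end SigmaDerivation

theorem eventually_le_pow_of_factorial_mul_le {u : ℕ → ℝ} {C : ℝ}
    (h : ∀ᶠ n in atTop, (n ! : ℝ) * u n ≤ C ^ n) {ε : ℝ} (hε : 0 < ε) :
    ∀ᶠ n in atTop, u n ≤ ε ^ n := by
  have hsmall : ∀ᶠ n in atTop, (C / ε) ^ n / n ! ≤ 1 :=
    (FloorSemiring.tendsto_pow_div_factorial_atTop (C / ε)).eventually_le_const zero_lt_one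
  filter_upwards [h, hsmall] with n hn hsmall
  have hfac : (0 : ℝ) < n ! := by positivity
  rw [div_pow, div_div, div_le_one (by positivity)] at hsmall
  exact le_of_mul_le_mul_left (hn.trans (hsmall.trans_eq (mul_comm _ _))) hfac

theorem spectralRadius_eq_zero_of_eventually_nnnorm_pow_le {𝕜 A : Type*} [NormedField 𝕜]
    [NormedRing A] [NormedAlgebra 𝕜 A] [CompleteSpace A] {x : A}
    (h : ∀ ε : ℝ≥0, 0 < ε → ∀ᶠ n in atTop, ‖x ^ n‖₊ ≤ ε ^ n) : spectralRadius 𝕜 x = 0 := by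
  refine le_antisymm (ENNReal.le_of_forall_pos_le_add fun ε hε _ => ?_) zero_le
  refine (spectrum.spectralRadius_le_liminf_pow_nnnorm_pow_one_div 𝕜 x).trans ?_
  rw [zero_add]
  refine liminf_le_of_frequently_le' (Eventually.frequently ?_)
  filter_upwards [h ε hε, eventually_ne_atTop 0] with n hn hn0
  calc (‖x ^ n‖₊ : ℝ≥0∞) ^ (1 / n : ℝ) ≤ ((ε : ℝ≥0∞) ^ n) ^ (1 / n : ℝ) := by
        gcongr
        exact_mod_cast hn
    _ = ε := by rw [one_div, ENNReal.pow_rpow_inv_natCast hn0]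

theorem spectralRadius_eq_zero_of_factorial_mul_norm_pow_le {𝕜 A : Type*} [NormedField 𝕜]
    [NormedRing A] [NormedAlgebra 𝕜 A] [CompleteSpace A] {x : A} {C : ℝ}
    (h : ∀ᶠ n in atTop, (n ! : ℝ) * ‖x ^ n‖ ≤ C ^ n) : spectralRadius 𝕜 x = 0 :=
  spectralRadius_eq_zero_of_eventually_nnnorm_pow_le fun _ hε =>
    eventually_le_pow_of_factorial_mul_le h hε

theorem stmt_16_general {A : Type*} [NormedRing A] [NormedAlgebra ℂ A] [CompleteSpace A]
    (σ d : A →L[ℂ] A)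
    (hder : ∀ a b : A, d (a * b) = d a * σ b + σ a * d b)
    (hdσ : ∀ x : A, d (σ x) = d x) (hσd : ∀ x : A, σ (d x) = d x)
    (a : A) (ha : d (d a) = 0) :
    spectralRadius ℂ (d a) = 0 := by
  refine spectralRadius_eq_zero_of_factorial_mul_norm_pow_le (C := ‖d‖ * ‖a‖) ?_
  filter_upwards [eventually_ge_atTop 1] with n hn
  obtain ⟨n, rfl⟩ := Nat.exists_eq_add_of_le' hn
  calc ((n + 1)! : ℝ) * ‖d a ^ (n + 1)‖ = ‖(d ^ (n + 1)) (a ^ (n + 1))‖ := by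
        rw [FunLike.coe_pow_eq_iterate, SigmaDerivation.iterate_apply_pow hder hdσ hσd ha,
          RCLike.norm_nsmul ℂ, nsmul_eq_mul]
    _ ≤ ‖d ^ (n + 1)‖ * ‖a ^ (n + 1)‖ := (d ^ (n + 1)).le_opNorm _
    _ ≤ ‖d‖ ^ (n + 1) * ‖a‖ ^ (n + 1) := by
        gcongr <;> exact norm_pow_le' _ n.succ_pos
    _ = (‖d‖ * ‖a‖) ^ (n + 1) := (mul_pow _ _ _).symm

/-- Kleinecke–Shirokov type theorem: Let `A` be a complex Banach
algebra, `σ` a bounded endomorphism, `d` a bounded `σ`-derivation with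
`d ∘ σ = σ ∘ d = d`. If `d²(a) = 0`, then `d(a)` is quasinilpotent. -/
theorem stmt_16 {A : Type*} [NormedRing A] [NormedAlgebra ℂ A] [CompleteSpace A]
    (σ d : A →L[ℂ] A)
    (hσ : ∀ a b : A, σ (a * b) = σ a * σ b)
    (hder : ∀ a b : A, d (a * b) = d a * σ b + σ a * d b)
    (hdσ : ∀ x : A, d (σ x) = d x) (hσd : ∀ x : A, σ (d x) = d x)
    (a : A) (ha : d (d a) = 0) :
    spectralRadius ℂ (d a) = 0 :=
  stmt_16_general σ d hder hdσ hσd a ha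
end
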